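/- arXiv:1604.07587 — 6 statements merged into one kernel-verified Lean document; each statement's English description precedes it below -/
import Mathlib

section
/- Let $\{x_n^*\}$ be a sequence in $\ell_1$ converging coordinatewise to $0$ such that $\lim_{n\to\infty}\|x_n^*\|$ exists. Then for every $x^* \in \ell_1$, $\lim_{n\to\infty}\|x_n^* + x^*\| = \lim_{n\to\infty}\|x_n^*\| + \|x^*\|$. -/
open Filter Topology ENNReal NormedSpace

noncomputable section

instance : Fact ((1:ℝ≥0∞) ≤ 1) := ⟨le_rfl⟩

/-- The space `ℓ₁` of absolutely summable real sequences. -/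
abbrev ell1 : Type := lp (fun _ : ℕ => ℝ) 1

/-- The standard unit vector basis of `ℓ₁`. -/
def basisv (i : ℕ) : ell1 := lp.single 1 i (1:ℝ)

/-- The weak-star topology `σ(ℓ₁, X)` on `ℓ₁` induced by a predual `X` via an
isometric identification `e` of the dual of `X` with `ℓ₁`. -/
def wstar (X : Type*) [NormedAddCommGroup X] [NormedSpace ℝ X]
    (e : StrongDual ℝ X ≃ₗᵢ[ℝ] ell1) : TopologicalSpace ell1 :=
  TopologicalSpace.induced (fun y => StrongDual.toWeakDual (e.symm y)) inferInstance

/-- The weak-star topology `σ(Y*, Y)` on the dual of a normed space `Y`. -/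
def wsDual (Y : Type*) [NormedAddCommGroup Y] [NormedSpace ℝ Y] :
    TopologicalSpace (StrongDual ℝ Y) :=
  TopologicalSpace.induced (fun φ : StrongDual ℝ Y => StrongDual.toWeakDual φ)
    inferInstance

/-! In `ℓ₁` the defect `‖xₙ + y‖ - ‖xₙ‖ - ‖y‖` is the sum over `i` of
`|xₙ(i) + y(i)| - |xₙ(i)| - |y(i)|`. Each term is bounded by `2|y(i)|`, which is summable, and
tends to `0` as `xₙ(i) → 0`, so by dominated convergence for series the defect tends to `0`. -/

theorem abs_norm_add_sub_norm_sub_norm_le {E : Type*} [SeminormedAddCommGroup E] (a b : E) :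
    |‖a + b‖ - ‖a‖ - ‖b‖| ≤ 2 * ‖b‖ := by
  have upper := norm_add_le a b
  have lower := norm_sub_norm_le a (-b)
  rw [sub_neg_eq_add, norm_neg] at lower
  rw [abs_le]
  constructor <;> linarith

theorem tendsto_norm_add_sub_norm_sub_norm {α E : Type*} [SeminormedAddCommGroup E] {l : Filter α}
    {a : α → E} (ha : Tendsto a l (𝓝 0)) (b : E) :
    Tendsto (fun n => ‖a n + b‖ - ‖a n‖ - ‖b‖) l (𝓝 0) := by
  have h := ((ha.add_const b).norm.sub ha.norm).sub_const ‖b‖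
  simpa using h

namespace lp

variable {ι : Type*} {E : ι → Type*} [∀ i, NormedAddCommGroup (E i)]

theorem norm_eq_tsum_norm_of_one (f : lp E 1) : ‖f‖ = ∑' i, ‖f i‖ := by
  simpa using lp.norm_eq_tsum_rpow (p := 1) (by norm_num) f

theorem summable_norm_of_one (f : lp E 1) : Summable fun i => ‖f i‖ := by
  simpa using (lp.memℓp f).summable (p := 1) (by norm_num)

theorem norm_add_sub_norm_sub_norm_eq_tsum (f g : lp E 1) :
    ‖f + g‖ - ‖f‖ - ‖g‖ = ∑' i, (‖f i + g i‖ - ‖f i‖ - ‖g i‖) := by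
  have hfg : Summable fun i => ‖f i + g i‖ := by simpa using summable_norm_of_one (f + g)
  rw [Summable.tsum_sub (hfg.sub (summable_norm_of_one f)) (summable_norm_of_one g),
    Summable.tsum_sub hfg (summable_norm_of_one f), norm_eq_tsum_norm_of_one,
    norm_eq_tsum_norm_of_one, norm_eq_tsum_norm_of_one]
  simp

theorem tendsto_norm_add_sub_norm_sub_norm_of_one {α : Type*} {l : Filter α} {x : α → lp E 1}
    (hcoord : ∀ i, Tendsto (fun n => x n i) l (𝓝 0)) (y : lp E 1) :
    Tendsto (fun n => ‖x n + y‖ - ‖x n‖ - ‖y‖) l (𝓝 0) := by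
  simp_rw [norm_add_sub_norm_sub_norm_eq_tsum]
  simpa using tendsto_tsum_of_dominated_convergence ((summable_norm_of_one y).mul_left 2)
    (fun i => tendsto_norm_add_sub_norm_sub_norm (hcoord i) (y i))
    (.of_forall fun n i => by
      simpa only [Real.norm_eq_abs] using abs_norm_add_sub_norm_sub_norm_le (x n i) (y i))

end lp

theorem stmt0 (x : ℕ → ell1) (L : ℝ)
    (hcoord : ∀ i : ℕ, Tendsto (fun n => x n i) atTop (𝓝 (0:ℝ)))
    (hL : Tendsto (fun n => ‖x n‖) atTop (𝓝 L)) :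
    ∀ y : ell1, Tendsto (fun n => ‖x n + y‖) atTop (𝓝 (L + ‖y‖)) := by
  intro y
  have h := ((lp.tendsto_norm_add_sub_norm_sub_norm_of_one hcoord y).add hL).add_const ‖y‖
  rw [zero_add] at h
  exact h.congr fun n => by ring
end
end

section
/- Let $X$ be a Banach space whose dual is isometric to $\ell_1$ (with standard basis $\{e_i^*\}$), and suppose there is $0 \le r < 1$ such that every $w^*$-limit point of the set of extreme points of $B_{\ell_1}$ lies in $rB_{\ell_1}$. Then for every $x \in B_X$, $\limsup_{i\to\infty} |e_i^*(x)| \le r$. -/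
open Filter Topology ENNReal NormedSpace

noncomputable section

/-!
Suppose `|e_i^*(x)| > c > r` for infinitely many `i`. By Banach–Alaoglu these basis vectors have
a `w^*`-cluster point `y`; as they are pairwise distinct, `y` is a `w^*`-limit point of the
extreme points, so `‖y‖ ≤ r`. But evaluation at `x` is `w^*`-continuous, so
`c ≤ |y(x)| ≤ ‖y‖ ‖x‖ ≤ r`.
-/

theorem mem_closure_diff_singleton_of_mapClusterPt {ι α : Type*} [TopologicalSpace α]
    {l : Filter ι} {u : ι → α} {s : Set α} {y : α} (hy : MapClusterPt y l u)
    (hu : Tendsto u l cofinite) (hs : ∀ᶠ i in l, u i ∈ s) : y ∈ closure (s \ {y}) :=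
  mem_closure_iff_clusterPt.2 <| hy.clusterPt.mono <| le_principal_iff.2 <|
    inter_mem hs (hu (Set.finite_singleton y).compl_mem_cofinite)

theorem norm_basisv (i : ℕ) : ‖basisv i‖ = 1 := by
  simp [basisv, lp.norm_single (p := 1) (E := fun _ : ℕ => ℝ) zero_lt_one i (1 : ℝ)]

theorem basisv_injective : Function.Injective basisv := by
  intro i j h
  by_contra hij
  have hi := congrArg (fun v : ell1 => (v : ℕ → ℝ) i) h
  simp only [basisv, lp.single_apply_self, lp.single_apply_ne 1 j _ hij] at hi
  exact one_ne_zero hi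

section WeakStar

variable {X : Type*} [NormedAddCommGroup X] [NormedSpace ℝ X]
  (e : StrongDual ℝ X ≃ₗᵢ[ℝ] ell1)

theorem isInducing_wstar :
    @Topology.IsInducing _ _ (wstar X e) _ fun y => StrongDual.toWeakDual (e.symm y) :=
  @Topology.IsInducing.mk _ _ (wstar X e) _ _ rfl

theorem continuous_wstar_eval (x : X) : @Continuous _ _ (wstar X e) _ fun y => e.symm y x :=
  let := wstar X e
  (WeakDual.eval_continuous x).comp (isInducing_wstar e).continuous

theorem exists_mapClusterPt_wstar {ι : Type*} {l : Filter ι} [l.NeBot] {u : ι → ell1} {R : ℝ}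
    (hu : ∀ i, ‖u i‖ ≤ R) : ∃ y, @MapClusterPt _ (wstar X e) _ y l u := by
  obtain ⟨ψ, -, hψ⟩ :=
    (WeakDual.isCompact_closedBall (𝕜 := ℝ) (E := X) 0 R).exists_mapClusterPt
    (f := l) (u := fun i => StrongDual.toWeakDual (e.symm (u i))) <| by
      refine tendsto_principal.2 (Eventually.of_forall fun i => ?_)
      simpa using hu i
  let := wstar X e
  refine ⟨e (StrongDual.toWeakDual.symm ψ), (isInducing_wstar e).mapClusterPt_iff.1 ?_⟩
  rw [← mapClusterPt_comp]
  simpa only [Function.comp_def, LinearIsometryEquiv.symm_apply_apply,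
    LinearEquiv.apply_symm_apply] using hψ

end WeakStar

theorem stmt2_general (X : Type*) [NormedAddCommGroup X] [NormedSpace ℝ X]
    (e : StrongDual ℝ X ≃ₗᵢ[ℝ] ell1) (r : ℝ)
    (hlim : ∀ y : ell1,
      y ∈ @closure _ (wstar X e) ({z : ell1 | ∃ i, z = basisv i ∨ z = -basisv i} \ {y}) →
      ‖y‖ ≤ r) :
    ∀ x : X, ‖x‖ ≤ 1 → Filter.limsup (fun i => |(e.symm (basisv i)) x|) atTop ≤ r := by
  let := wstar X e
  intro x hx
  by_contra! hlt
  obtain ⟨c, hrc, hcL⟩ := exists_between hlt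
  set l := atTop ⊓ 𝓟 {i | c < |e.symm (basisv i) x|}
  have : l.NeBot := frequently_iff_neBot.1 <| frequently_lt_of_lt_limsup
    (isCoboundedUnder_le_of_le atTop fun i => abs_nonneg _) hcL
  obtain ⟨y, hy⟩ := exists_mapClusterPt_wstar e (l := l) (fun i => (norm_basisv i).le)
  have hyr : ‖y‖ ≤ r := hlim y <| mem_closure_diff_singleton_of_mapClusterPt hy
    (basisv_injective.tendsto_cofinite.mono_left (inf_le_left.trans Nat.cofinite_eq_atTop.ge))
    (Eventually.of_forall fun i => ⟨i, Or.inl rfl⟩)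
  have hcy : c ≤ |e.symm y x| :=
    isClosed_Ici.mem_of_mapClusterPt
      (hy.continuousAt_comp ((continuous_wstar_eval e x).abs.continuousAt))
      (mem_inf_of_right fun _ hi => show c ≤ _ from le_of_lt hi)
  have hyx : |e.symm y x| ≤ r :=
    calc |e.symm y x| ≤ ‖e.symm y‖ * ‖x‖ := (e.symm y).le_opNorm x
      _ ≤ ‖y‖ := by simpa using mul_le_of_le_one_right (norm_nonneg _) hx
      _ ≤ r := hyr
  linarith

theorem stmt2 (X : Type*) [NormedAddCommGroup X] [NormedSpace ℝ X] [CompleteSpace X]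
    (e : StrongDual ℝ X ≃ₗᵢ[ℝ] ell1) (r : ℝ) (hr0 : 0 ≤ r) (hr1 : r < 1)
    (hlim : ∀ y : ell1,
      y ∈ @closure _ (wstar X e) ({z : ell1 | ∃ i, z = basisv i ∨ z = -basisv i} \ {y}) →
      ‖y‖ ≤ r) :
    ∀ x : X, ‖x‖ ≤ 1 → Filter.limsup (fun i => |(e.symm (basisv i)) x|) atTop ≤ r :=
  stmt2_general X e r hlim
end
end

section
/- Let $Y^*$ be a dual Banach space, $K \subset Y^*$ a convex $w^*$-compact set, and $T: K \to K$ a nonexpansive mapping. Then for every $x^* \in K$ there is a closed convex subset $H(x^*) \subset K$ invariant under $T$ such that (a) $\mathrm{diam}(H(x^*)) \le \sup_n \|x^* - T^n x^*\|$, and (b) $\sup_{y^* \in H(x^*)}\|x^* - y^*\| \le 2\sup_n \|x^* - T^n x^*\|$. -/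
open Filter Topology ENNReal NormedSpace

noncomputable section

/-!
Let `r = sup ‖x - Tⁿ x‖`; by nonexpansiveness any two points of the orbit are within `r` of each
other. The weak-star closed convex hulls `C_N` of the orbit tails `{Tᵐ x | m ≥ N}` decrease, so by
compactness they share a point `a`, and `‖x - a‖ ≤ r`. Put `S₀ = C₀` and let `S_{k+1}` be the
weak-star closed convex hull of `T(S_k)`. Norm balls are weak-star closed, so taking these hulls
does not increase diameters and `diam S_k ≤ r`; moreover `C_k ⊆ S_k`. The points lying in `S_k`
for all large `k` form a convex `T`-invariant set of diameter `≤ r` containing `a`, and its norm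
closure is the required `H`.
-/

open Set Metric

notation "closedConvexHull[" t "]" => @closedConvexHull ℝ _ _ _ _ _ t

section HullImage

variable {E : Type*} [NormedAddCommGroup E] [NormedSpace ℝ E] (τ : TopologicalSpace E)

theorem dist_le_of_mem_closedConvexHull
    (hball : ∀ (z : E) (r : ℝ), IsClosed[τ] (closedBall z r)) {s : Set E} {r : ℝ}
    (hs : ∀ a ∈ s, ∀ b ∈ s, dist a b ≤ r) :
    ∀ a ∈ closedConvexHull[τ] s, ∀ b ∈ closedConvexHull[τ] s, dist a b ≤ r := by
  have hull_subset_ball : ∀ c, s ⊆ closedBall c r → closedConvexHull[τ] s ⊆ closedBall c r :=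
    fun c hc => @closedConvexHull_min ℝ E _ _ _ _ τ _ _ hc (convex_closedBall c r) (hball c r)
  intro a ha b hb
  refine mem_closedBall_comm.1 (hull_subset_ball a (fun c hc => ?_) hb)
  exact mem_closedBall_comm.1 (hull_subset_ball c (fun d hd => hs d hd c hc) ha)

-- `T` is not affine, so the image of a convex set has to be convexified again.
def hullImage (T : E → E) (s : Set E) : Set E := closedConvexHull[τ] (T '' s)

variable {τ} {T : E → E}

theorem monotone_hullImage : Monotone (hullImage τ T) :=
  fun _ _ h => (@closedConvexHull ℝ E _ _ _ _ τ).monotone (image_mono h)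

theorem mapsTo_hullImage (s : Set E) : MapsTo T s (hullImage τ T s) :=
  fun _ hz => @subset_closedConvexHull ℝ E _ _ _ _ τ _ _ (mem_image_of_mem T hz)

theorem convex_iterate_hullImage {s : Set E} (hs : Convex ℝ s) (k : ℕ) :
    Convex ℝ ((hullImage τ T)^[k] s) := by
  cases k with
  | zero => exact hs
  | succ k =>
    rw [Function.iterate_succ_apply']
    exact @convex_closedConvexHull ℝ E _ _ _ _ τ _

theorem iterate_hullImage_subset {K : Set E} (hKconv : Convex ℝ K) (hKτ : IsClosed[τ] K)
    (hT : MapsTo T K K) {s : Set E} (hs : s ⊆ K) (k : ℕ) : (hullImage τ T)^[k] s ⊆ K := by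
  induction k with
  | zero => exact hs
  | succ k ih =>
    rw [Function.iterate_succ_apply']
    exact @closedConvexHull_min ℝ E _ _ _ _ τ _ _ ((image_mono ih).trans hT.image_subset) hKconv hKτ

theorem dist_le_of_mem_iterate_hullImage (hball : ∀ (z : E) (r : ℝ), IsClosed[τ] (closedBall z r))
    {K : Set E} (hKconv : Convex ℝ K) (hKτ : IsClosed[τ] K) (hT : MapsTo T K K)
    (hL : LipschitzOnWith 1 T K) {s : Set E} (hsK : s ⊆ K) {r : ℝ}
    (hs : ∀ a ∈ s, ∀ b ∈ s, dist a b ≤ r) (k : ℕ) :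
    ∀ a ∈ (hullImage τ T)^[k] s, ∀ b ∈ (hullImage τ T)^[k] s, dist a b ≤ r := by
  induction k with
  | zero => exact hs
  | succ k ih =>
    rw [Function.iterate_succ_apply']
    refine dist_le_of_mem_closedConvexHull τ hball ?_
    rintro _ ⟨a, ha, rfl⟩ _ ⟨b, hb, rfl⟩
    have hK := iterate_hullImage_subset hKconv hKτ hT hsK k
    have hTab : dist (T a) (T b) ≤ dist a b := by simpa using hL.dist_le_mul a (hK ha) b (hK hb)
    exact hTab.trans (ih a ha b hb)

end HullImage

section Liminf

variable {ι α : Type*} {l : Filter ι}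

theorem convex_liminf {E : Type*} [AddCommGroup E] [Module ℝ E] {S : ι → Set E}
    (hS : ∀ i, Convex ℝ (S i)) : Convex ℝ (liminf S l) := by
  intro a ha b hb p q hp hq hpq
  rw [mem_liminf_iff_eventually_mem] at ha hb ⊢
  exact (ha.and hb).mono fun i hi => hS i hi.1 hi.2 hp hq hpq

theorem dist_le_of_mem_liminf [PseudoMetricSpace α] [l.NeBot] {S : ι → Set α} {r : ℝ}
    (hS : ∀ i, ∀ a ∈ S i, ∀ b ∈ S i, dist a b ≤ r) :
    ∀ a ∈ liminf S l, ∀ b ∈ liminf S l, dist a b ≤ r := by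
  intro a ha b hb
  rw [mem_liminf_iff_eventually_mem] at ha hb
  obtain ⟨i, hai, hbi⟩ := (ha.and hb).exists
  exact hS i a hai b hbi

theorem mapsTo_liminf_atTop {S : ℕ → Set α} {f : α → α} (hf : ∀ k, MapsTo f (S k) (S (k + 1))) :
    MapsTo f (liminf S atTop) (liminf S atTop) := by
  intro z hz
  rw [mem_liminf_iff_eventually_mem] at hz ⊢
  obtain ⟨k₀, hk₀⟩ := eventually_atTop.1 hz
  refine eventually_atTop.2 ⟨k₀ + 1, fun k hk => ?_⟩
  obtain ⟨j, rfl⟩ : ∃ j, k = j + 1 := ⟨k - 1, by omega⟩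
  exact hf j (hk₀ j (by omega))

end Liminf

section Nonexpansive

variable {E : Type*} [PseudoMetricSpace E] {T : E → E} {K : Set E}

theorem LipschitzOnWith.dist_iterate_le (hL : LipschitzOnWith 1 T K) (hT : MapsTo T K K)
    {a b : E} (ha : a ∈ K) (hb : b ∈ K) (n : ℕ) : dist (T^[n] a) (T^[n] b) ≤ dist a b := by
  induction n with
  | zero => exact le_rfl
  | succ n ih =>
    rw [Function.iterate_succ_apply', Function.iterate_succ_apply']
    have := hL.dist_le_mul _ (hT.iterate n ha) _ (hT.iterate n hb)
    simp only [NNReal.coe_one, one_mul] at this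
    exact this.trans ih

theorem LipschitzOnWith.dist_iterate_iterate_le (hL : LipschitzOnWith 1 T K) (hT : MapsTo T K K)
    {x : E} (hx : x ∈ K) {r : ℝ} (horbit : ∀ n, dist x (T^[n] x) ≤ r) (i j : ℕ) :
    dist (T^[i] x) (T^[j] x) ≤ r := by
  wlog hij : i ≤ j generalizing i j
  · rw [dist_comm]
    exact this j i (by omega)
  obtain ⟨n, rfl⟩ := Nat.exists_eq_add_of_le hij
  rw [Function.iterate_add_apply]
  exact (hL.dist_iterate_le hT hx (hT.iterate n hx) i).trans (horbit n)

end Nonexpansive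

section OrbitTail

variable {E : Type*} [NormedAddCommGroup E] [NormedSpace ℝ E] (τ : TopologicalSpace E)

def orbitTailHull (T : E → E) (x : E) (N : ℕ) : Set E :=
  closedConvexHull[τ] ((fun m => T^[m] x) '' Ici N)

variable {τ} {T : E → E} {x : E}

theorem orbitTailHull_subset {K : Set E} (hKconv : Convex ℝ K) (hKτ : IsClosed[τ] K)
    (hT : MapsTo T K K) (hx : x ∈ K) (N : ℕ) : orbitTailHull τ T x N ⊆ K := by
  refine @closedConvexHull_min ℝ E _ _ _ _ τ _ _ ?_ hKconv hKτ
  rintro _ ⟨m, -, rfl⟩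
  exact hT.iterate m hx

theorem nonempty_iInter_orbitTailHull {K : Set E} (hKconv : Convex ℝ K)
    (hKcpt : @IsCompact E τ K) (hKτ : IsClosed[τ] K) (hT : MapsTo T K K) (hx : x ∈ K) :
    (⋂ N, orbitTailHull τ T x N).Nonempty := by
  have hclosed (N : ℕ) : IsClosed[τ] (orbitTailHull τ T x N) :=
    @isClosed_closedConvexHull ℝ E _ _ _ _ τ _
  refine @IsCompact.nonempty_iInter_of_sequence_nonempty_isCompact_isClosed E τ _
    (fun N => ?_) (fun N => ?_) (@IsCompact.of_isClosed_subset E τ _ _ hKcpt (hclosed 0)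
      (orbitTailHull_subset hKconv hKτ hT hx 0)) hclosed
  · exact (@closedConvexHull ℝ E _ _ _ _ τ).monotone (image_mono (Ici_subset_Ici.2 N.le_succ))
  · exact ⟨T^[N] x, @subset_closedConvexHull ℝ E _ _ _ _ τ _ _ ⟨N, self_mem_Ici, rfl⟩⟩

theorem orbitTailHull_subset_iterate_hullImage (k : ℕ) :
    orbitTailHull τ T x k ⊆ (hullImage τ T)^[k] (orbitTailHull τ T x 0) := by
  refine monotone_hullImage.seq_le_seq (x := orbitTailHull τ T x)
    (y := fun k => (hullImage τ T)^[k] (orbitTailHull τ T x 0)) k le_rfl (fun N _ => ?_)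
    (fun N _ => (Function.iterate_succ_apply' _ _ _).ge)
  refine (@closedConvexHull ℝ E _ _ _ _ τ).monotone ?_
  rintro _ ⟨m, hm, rfl⟩
  obtain ⟨p, rfl⟩ : ∃ p, m = p + 1 := ⟨m - 1, by grind⟩
  refine ⟨T^[p] x, @subset_closedConvexHull ℝ E _ _ _ _ τ _ _ ⟨p, ?_, rfl⟩, ?_⟩
  · exact Nat.le_of_succ_le_succ hm
  · exact (Function.iterate_succ_apply' T p x).symm

theorem dist_le_of_mem_orbitTailHull (hball : ∀ (z : E) (r : ℝ), IsClosed[τ] (closedBall z r))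
    {K : Set E} (hT : MapsTo T K K) (hL : LipschitzOnWith 1 T K) (hx : x ∈ K) {r : ℝ}
    (horbit : ∀ n, dist x (T^[n] x) ≤ r) (N : ℕ) :
    ∀ a ∈ orbitTailHull τ T x N, ∀ b ∈ orbitTailHull τ T x N, dist a b ≤ r := by
  refine dist_le_of_mem_closedConvexHull τ hball ?_
  rintro _ ⟨i, -, rfl⟩ _ ⟨j, -, rfl⟩
  exact hL.dist_iterate_iterate_le hT hx horbit i j

theorem orbitTailHull_zero_subset_closedBall
    (hball : ∀ (z : E) (r : ℝ), IsClosed[τ] (closedBall z r)) {r : ℝ}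
    (horbit : ∀ n, dist x (T^[n] x) ≤ r) : orbitTailHull τ T x 0 ⊆ closedBall x r := by
  refine @closedConvexHull_min ℝ E _ _ _ _ τ _ _ ?_ (convex_closedBall x r) (hball x r)
  rintro _ ⟨m, -, rfl⟩
  exact mem_closedBall_comm.1 (horbit m)

end OrbitTail

-- `τ` is the instance topology inside this statement, so the norm closure is taken afterwards.
theorem exists_invariant_convex_subset_of_isCompact {E : Type*} [NormedAddCommGroup E]
    [NormedSpace ℝ E] (τ : TopologicalSpace E)
    (hball : ∀ (z : E) (r : ℝ), IsClosed[τ] (closedBall z r)) {K : Set E} (hKconv : Convex ℝ K)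
    (hKcpt : @IsCompact E τ K) (hKτ : IsClosed[τ] K) {T : E → E}
    (hT : MapsTo T K K) (hL : LipschitzOnWith 1 T K) {x : E} (hx : x ∈ K) {r : ℝ}
    (horbit : ∀ n, dist x (T^[n] x) ≤ r) :
    ∃ U : Set E, U.Nonempty ∧ U ⊆ K ∧ Convex ℝ U ∧ MapsTo T U U ∧
      (∀ a ∈ U, ∀ b ∈ U, dist a b ≤ r) ∧ U ⊆ closedBall x (2 * r) := by
  set C := orbitTailHull τ T x
  set S : ℕ → Set E := fun k => (hullImage τ T)^[k] (C 0)
  have hCK := orbitTailHull_subset hKconv hKτ hT hx 0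
  have hU : ∀ y ∈ liminf S atTop, ∀ z ∈ liminf S atTop, dist y z ≤ r :=
    dist_le_of_mem_liminf (dist_le_of_mem_iterate_hullImage hball hKconv hKτ hT hL hCK
      (dist_le_of_mem_orbitTailHull hball hT hL hx horbit 0))
  obtain ⟨a, ha⟩ := nonempty_iInter_orbitTailHull hKconv hKcpt hKτ hT hx
  have haU : a ∈ liminf S atTop := mem_liminf_iff_eventually_mem.2
    (Eventually.of_forall fun k => orbitTailHull_subset_iterate_hullImage k (mem_iInter.1 ha k))
  refine ⟨liminf S atTop, ⟨a, haU⟩, fun z hz => ?_, convex_liminf fun k => ?_,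
    mapsTo_liminf_atTop fun k => ?_, hU, fun z hz => ?_⟩
  · obtain ⟨k, hk⟩ := (mem_liminf_iff_eventually_mem.1 hz).exists
    exact iterate_hullImage_subset hKconv hKτ hT hCK k hk
  · exact convex_iterate_hullImage (@convex_closedConvexHull ℝ E _ _ _ _ τ _) k
  · simpa only [S, Function.iterate_succ_apply'] using mapsTo_hullImage (S k)
  · have hax := orbitTailHull_zero_subset_closedBall hball horbit (mem_iInter.1 ha 0)
    rw [mem_closedBall] at hax ⊢
    linarith [dist_triangle z a x, hU z hz a haU]

section WeakStar

variable {Y : Type*} [NormedAddCommGroup Y] [NormedSpace ℝ Y]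

theorem isClosed_closedBall_wsDual (z : StrongDual ℝ Y) (r : ℝ) :
    IsClosed[wsDual Y] (closedBall z r) :=
  isClosed_induced_iff.2 ⟨_, WeakDual.isClosed_closedBall z r, rfl⟩

theorem t2Space_wsDual : @T2Space (StrongDual ℝ Y) (wsDual Y) :=
  @Topology.IsEmbedding.t2Space _ _ (wsDual Y) _ _ _
    (Topology.IsEmbedding.induced StrongDual.toWeakDual.injective)

theorem isBounded_of_isCompact_wsDual [CompleteSpace Y] {K : Set (StrongDual ℝ Y)}
    (hK : @IsCompact _ (wsDual Y) K) : Bornology.IsBounded K := by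
  have hK' : Bornology.IsBounded (StrongDual.toWeakDual '' K) :=
    WeakDual.isBounded_iff_isVonNBounded.2
      ((@IsCompact.image _ _ (wsDual Y) _ _ _ hK continuous_induced_dom).isVonNBounded ℝ)
  exact hK'.subset (subset_preimage_image _ _)

end WeakStar

theorem stmt5 (Y : Type*) [NormedAddCommGroup Y] [NormedSpace ℝ Y] [CompleteSpace Y]
    (K : Set (StrongDual ℝ Y)) (hconv : Convex ℝ K)
    (hcpt : @IsCompact _ (wsDual Y) K)
    (T : StrongDual ℝ Y → StrongDual ℝ Y) (hT : Set.MapsTo T K K)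
    (hnonexp : ∀ x ∈ K, ∀ y ∈ K, ‖T x - T y‖ ≤ ‖x - y‖) :
    ∀ x ∈ K, ∃ H : Set (StrongDual ℝ Y), H.Nonempty ∧ H ⊆ K ∧ IsClosed H ∧
      Convex ℝ H ∧ Set.MapsTo T H H ∧
      Metric.diam H ≤ ⨆ n : ℕ, ‖x - T^[n] x‖ ∧
      ∀ y ∈ H, ‖x - y‖ ≤ 2 * ⨆ n : ℕ, ‖x - T^[n] x‖ := by
  intro x hx
  have hL : LipschitzOnWith 1 T K := .mk_one (by simpa only [dist_eq_norm] using hnonexp)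
  have hKτ : IsClosed[wsDual Y] K := @IsCompact.isClosed _ (wsDual Y) t2Space_wsDual K hcpt
  have hKclosed : IsClosed K := hKτ.mono NormedSpace.Dual.toWeakDual_continuous.le_induced
  -- `K` is norm bounded by the uniform boundedness principle, so the supremum is not a junk value.
  have horbit : ∀ n, dist x (T^[n] x) ≤ ⨆ n : ℕ, ‖x - T^[n] x‖ := fun n => by
    rw [dist_eq_norm]
    refine le_ciSup (f := fun n => ‖x - T^[n] x‖) ⟨diam K, ?_⟩ n
    rintro _ ⟨m, rfl⟩
    simpa only [dist_eq_norm] using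
      dist_le_diam_of_mem (isBounded_of_isCompact_wsDual hcpt) hx (hT.iterate m hx)
  obtain ⟨U, ⟨a, ha⟩, hUK, hUconv, hUT, hUdist, hUball⟩ :=
    exists_invariant_convex_subset_of_isCompact (wsDual Y) isClosed_closedBall_wsDual hconv hcpt
      hKτ hT hL hx horbit
  have hclosureK : closure U ⊆ K := closure_minimal hUK hKclosed
  refine ⟨closure U, ⟨a, subset_closure ha⟩, hclosureK, isClosed_closure, hUconv.closure,
    hUT.closure_of_continuousOn (hL.continuousOn.mono hclosureK), ?_, fun y hy => ?_⟩
  · rw [diam_closure]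
    exact diam_le_of_forall_dist_le (dist_self x ▸ horbit 0) hUdist
  · simpa only [mem_closedBall, dist_comm y, dist_eq_norm] using
      closure_minimal hUball isClosed_closedBall hy
end
end

section
/- Let $\alpha = (\frac{r}{2}, \frac{r}{2}, 0, 0, \ldots) \in \ell_1$ with $0 < r < 1$, and let $W_\alpha = \{x \in c : \lim_i x(i) = \frac{r}{2}(x(1)+x(2))\}$. Then $\alpha$ is a $\sigma(\ell_1, W_\alpha)$-limit point of the set $\{\pm e_n^* : n \in \mathbb{N}\}$ of extreme points of $B_{\ell_1}$, and $0 < \|\alpha\|_1 = r < 1$; in particular the set of $w^*$-limit points of $\mathrm{ext}\,B_{\ell_1}$ is not contained in $\{0\}$ but is contained in $rB_{\ell_1}$. -/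
open Filter Topology ENNReal NormedSpace

noncomputable section

/-!
Every `w ∈ W_α` converges to `r/2 (w 0 + w 1)`, so `⟨eₙ, w⟩ = w n → ⟨α, w⟩`: the unit vectors
converge weak-star to `α`. Conversely, the sequences `e_m` (`m ≥ 2`), `(1, 0, r/2, r/2, …)` and
`(0, 1, r/2, r/2, …)` lie in `W_α`, separate the points of `ℓ₁`, and take only finitely many values
on `{±eₙ}`. Along the neighbourhood filter of a cluster point `y` of `{±eₙ} \ {y}` they are
therefore eventually constant, which forces first `y m = 0` for `m ≥ 2` and then `y = ±α`.
-/

/-- `σ(ℓ₁, W)` for `W = {w | P w}`, each `w` acting on `ℓ₁` by `y ↦ ∑' i, y i * w i`. -/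
def pairingTopology (P : (ℕ → ℝ) → Prop) : TopologicalSpace ell1 :=
  TopologicalSpace.induced
    (fun y : ell1 => fun w : {x : ℕ → ℝ // P x} => ∑' i, y i * w.1 i) inferInstance

def Walpha (r : ℝ) (x : ℕ → ℝ) : Prop :=
  (∃ L : ℝ, Tendsto x atTop (𝓝 L)) ∧ Tendsto x atTop (𝓝 (r / 2 * (x 0 + x 1)))

def signedBasis : Set ell1 := {z | ∃ i, z = basisv i ∨ z = -basisv i}

def alpha (r : ℝ) : ell1 := lp.single 1 0 (r / 2) + lp.single 1 1 (r / 2)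

def twoThenConst (a b c : ℝ) : ℕ → ℝ
  | 0 => a
  | 1 => b
  | _ + 2 => c

theorem Filter.Tendsto.eventually_eq_of_finite {ι X : Type*} [TopologicalSpace X] [T1Space X]
    {f : ι → X} {F : Filter ι} {a : X} {S : Set X} (h : Tendsto f F (𝓝 a)) (hS : S.Finite)
    (hfS : ∀ᶠ x in F, f x ∈ S) : ∀ᶠ x in F, f x = a := by
  have hcompl : ∀ᶠ x in F, f x ∉ S \ {a} :=
    h ((hS.sdiff (t := {a})).isClosed.isOpen_compl.mem_nhds fun ha => ha.2 rfl)
  filter_upwards [hfS, hcompl] with x hxS hx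
  by_contra hne
  exact hx ⟨hxS, hne⟩

lemma tsum_single_mul (n : ℕ) (a : ℝ) (w : ℕ → ℝ) :
    ∑' i, (lp.single 1 n a : ell1) i * w i = a * w n := by
  rw [tsum_eq_single n fun i hi => by simp [hi]]
  simp

lemma tsum_mul_pi_single (y : ℕ → ℝ) (m : ℕ) : ∑' i, y i * (Pi.single m 1 : ℕ → ℝ) i = y m := by
  rw [tsum_eq_single m fun i hi => by simp [hi]]
  simp

lemma tsum_single_add_single_mul (a b : ℝ) (w : ℕ → ℝ) :
    ∑' i, (lp.single 1 0 a + lp.single 1 1 b : ell1) i * w i = a * w 0 + b * w 1 := by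
  rw [tsum_eq_sum (s := Finset.range 2) fun i hi => ?_]
  · simp [Finset.sum_range_succ]
  · simp only [Finset.mem_range, not_lt] at hi
    simp [show i ≠ 0 by omega, show i ≠ 1 by omega]

lemma norm_single_add_single (a b : ℝ) :
    ‖(lp.single 1 0 a + lp.single 1 1 b : ell1)‖ = |a| + |b| := by
  rw [lp.norm_eq_tsum_rpow (by norm_num)]
  rw [tsum_eq_sum (s := Finset.range 2) fun i hi => ?_]
  · simp [Finset.sum_range_succ]
  · simp only [Finset.mem_range, not_lt] at hi
    simp [show i ≠ 0 by omega, show i ≠ 1 by omega]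

lemma eq_single_add_single_of_tail {y : ell1} (h : ∀ m, 2 ≤ m → y m = 0) :
    y = lp.single 1 0 (y 0) + lp.single 1 1 (y 1) := by
  ext i
  match i with
  | 0 => simp
  | 1 => simp
  | k + 2 => simp [h (k + 2) (by omega)]

lemma summable_mul_of_tendsto (y : ell1) {w : ℕ → ℝ} {L : ℝ} (hw : Tendsto w atTop (𝓝 L)) :
    Summable fun i => y i * w i := by
  obtain ⟨C, hC⟩ := isBounded_iff_forall_norm_le.1 (Metric.isBounded_range_of_tendsto w hw)
  have hy : Summable fun i => ‖y i‖ := by simpa using (lp.memℓp y).summable (by norm_num)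
  refine (hy.mul_right C).of_norm_bounded fun i => ?_
  rw [norm_mul]
  exact mul_le_mul_of_nonneg_left (hC _ ⟨i, rfl⟩) (norm_nonneg _)

lemma tsum_sub_mul_of_tendsto (y y' : ell1) {w : ℕ → ℝ} {L : ℝ} (hw : Tendsto w atTop (𝓝 L)) :
    ∑' i, (y - y') i * w i = ∑' i, y i * w i - ∑' i, y' i * w i := by
  simp only [lp.coeFn_sub, Pi.sub_apply, sub_mul]
  exact (summable_mul_of_tendsto y hw).tsum_sub (summable_mul_of_tendsto y' hw)

lemma exists_eq_single_of_mem_signedBasis {z : ell1} (hz : z ∈ signedBasis) :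
    ∃ n, ∃ σ ∈ ({1, -1} : Set ℝ), z = lp.single 1 n σ := by
  obtain ⟨n, rfl | rfl⟩ := hz
  · exact ⟨n, 1, by simp, rfl⟩
  · exact ⟨n, -1, by simp, by rw [basisv, lp.single_neg]⟩

section Topology

variable {P : (ℕ → ℝ) → Prop}

lemma tendsto_nhds_pairingTopology_iff {ι : Type*} {F : Filter ι} {f : ι → ell1} {y : ell1} :
    Tendsto f F (@nhds _ (pairingTopology P) y) ↔
      ∀ w, P w → Tendsto (fun a => ∑' i, f a i * w i) F (𝓝 (∑' i, y i * w i)) := by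
  rw [pairingTopology, nhds_induced, tendsto_comap_iff, tendsto_pi_nhds, Subtype.forall]
  rfl

lemma continuous_pairing {w : ℕ → ℝ} (hw : P w) :
    Continuous[pairingTopology P, _] fun y : ell1 => ∑' i, y i * w i :=
  @Continuous.comp ell1 ({x // P x} → ℝ) ℝ (pairingTopology P) _ _ _ _
    (continuous_apply (⟨w, hw⟩ : {x // P x})) continuous_induced_dom

/-- On `±eₙ` the functional of `w` takes only the finitely many values `±w n`, so it is eventually
equal to its limit. -/
lemma eventually_tsum_mul_eq {w : ℕ → ℝ} (hw : P w) (hfin : (Set.range w).Finite)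
    {s : Set ell1} (hs : s ⊆ signedBasis) (y : ell1) :
    ∀ᶠ z in @nhdsWithin _ (pairingTopology P) y s,
      ∑' i, z i * w i = ∑' i, y i * w i := by
  let := pairingTopology P
  refine ((continuous_pairing hw).tendsto y |>.mono_left nhdsWithin_le_nhds).eventually_eq_of_finite
    ((Set.toFinite ({1, -1} : Set ℝ)).image2 (· * ·) hfin) ?_
  filter_upwards [self_mem_nhdsWithin] with z hz
  obtain ⟨n, σ, hσ, rfl⟩ := exists_eq_single_of_mem_signedBasis (hs hz)
  rw [tsum_single_mul]
  exact Set.mem_image2_of_mem hσ (Set.mem_range_self n)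

end Topology

section Walpha

variable {r : ℝ}

lemma tendsto_twoThenConst (a b c : ℝ) : Tendsto (twoThenConst a b c) atTop (𝓝 c) :=
  tendsto_atTop_of_eventually_const (i₀ := 2) fun i hi => by
    obtain ⟨k, rfl⟩ := Nat.exists_eq_add_of_le' hi
    rfl

lemma walpha_twoThenConst (a b : ℝ) : Walpha r (twoThenConst a b (r / 2 * (a + b))) :=
  ⟨⟨_, tendsto_twoThenConst _ _ _⟩, tendsto_twoThenConst _ _ _⟩

lemma finite_range_twoThenConst (a b c : ℝ) : (Set.range (twoThenConst a b c)).Finite :=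
  (Set.toFinite {a, b, c}).subset <| Set.range_subset_iff.2 fun i => by
    rcases i with _ | _ | _ <;> simp [twoThenConst]

lemma walpha_pi_single {m : ℕ} (hm : 2 ≤ m) : Walpha r (Pi.single m 1) := by
  have h : Tendsto (Pi.single m 1 : ℕ → ℝ) atTop (𝓝 0) :=
    tendsto_atTop_of_eventually_const (i₀ := m + 1) fun i hi => by simp [show i ≠ m by omega]
  refine ⟨⟨0, h⟩, ?_⟩
  simpa [show (0 : ℕ) ≠ m by omega, show (1 : ℕ) ≠ m by omega] using h

lemma finite_range_pi_single (m : ℕ) : (Set.range (Pi.single m 1 : ℕ → ℝ)).Finite :=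
  (Set.toFinite {0, 1}).subset <| Set.range_subset_iff.2 fun i => by
    rcases eq_or_ne i m with rfl | h <;> simp [*]

lemma eq_of_forall_walpha_tsum_mul_eq {y y' : ell1}
    (h : ∀ w, Walpha r w → ∑' i, y i * w i = ∑' i, y' i * w i) : y = y' := by
  have hd : ∀ w, Walpha r w → ∑' i, (y - y') i * w i = 0 := fun w hw => by
    obtain ⟨L, hL⟩ := hw.1
    rw [tsum_sub_mul_of_tendsto y y' hL, h w hw, sub_self]
  have htail : ∀ m, 2 ≤ m → (y - y') m = 0 := fun m hm => by
    simpa [tsum_mul_pi_single] using hd _ (walpha_pi_single hm)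
  have hsplit := eq_single_add_single_of_tail htail
  have h0 := hd _ (walpha_twoThenConst (r := r) 1 0)
  have h1 := hd _ (walpha_twoThenConst (r := r) 0 1)
  rw [hsplit, tsum_single_add_single_mul] at h0 h1
  simp only [twoThenConst, mul_one, mul_zero, add_zero, zero_add] at h0 h1
  rw [← sub_eq_zero, hsplit, h0, h1]
  simp

lemma tsum_alpha_mul (w : ℕ → ℝ) : ∑' i, alpha r i * w i = r / 2 * (w 0 + w 1) := by
  rw [alpha, tsum_single_add_single_mul, mul_add]

lemma norm_alpha : ‖alpha r‖ = |r| := by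
  rw [alpha, norm_single_add_single, abs_div, abs_two, add_halves]

lemma tendsto_basisv_alpha :
    Tendsto basisv atTop (@nhds _ (pairingTopology (Walpha r)) (alpha r)) :=
  tendsto_nhds_pairingTopology_iff.2 fun w hw => by
    simpa only [basisv, tsum_single_mul, one_mul, tsum_alpha_mul] using hw.2

lemma alpha_mem_closure (hr : r ≠ 0) :
    alpha r ∈ @closure _ (pairingTopology (Walpha r)) (signedBasis \ {alpha r}) := by
  let := pairingTopology (Walpha r)
  refine mem_closure_of_tendsto tendsto_basisv_alpha ?_
  filter_upwards [eventually_ge_atTop 2] with n hn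
  refine ⟨⟨n, Or.inl rfl⟩, fun h => hr ?_⟩
  have h0 := congrArg (fun z : ell1 => z 0) h
  simp only [basisv, alpha, lp.single_apply, AddSubgroup.coe_add, PreLp.add_apply,
    Pi.single_eq_of_ne (show (0 : ℕ) ≠ n by omega), Pi.single_eq_same,
    Pi.single_eq_of_ne zero_ne_one, add_zero] at h0
  linarith

lemma apply_eq_zero_of_mem_closure {y : ell1}
    (hy : y ∈ @closure _ (pairingTopology (Walpha r)) (signedBasis \ {y})) {m : ℕ} (hm : 2 ≤ m) :
    y m = 0 := by
  let := pairingTopology (Walpha r)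
  have := mem_closure_iff_nhdsWithin_neBot.1 hy
  have hE : ∀ᶠ z in 𝓝[signedBasis \ {y}] y, z ∈ signedBasis \ {y} := self_mem_nhdsWithin
  have hm' : ∀ᶠ z in 𝓝[signedBasis \ {y}] y, z m = y m := by
    simpa only [tsum_mul_pi_single] using eventually_tsum_mul_eq (walpha_pi_single hm)
      (finite_range_pi_single m) (s := signedBasis \ {y}) Set.sdiff_subset y
  by_contra hym
  have hz : ∀ᶠ z in 𝓝[signedBasis \ {y}] y, z = lp.single 1 m (y m) := by
    filter_upwards [hE, hm'] with z hzE hzm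
    obtain ⟨n, σ, -, rfl⟩ := exists_eq_single_of_mem_signedBasis hzE.1
    obtain rfl : n = m := by
      by_contra hnm
      rw [lp.single_apply_ne _ _ _ (Ne.symm hnm)] at hzm
      exact hym hzm.symm
    rw [lp.single_apply_self] at hzm
    rw [hzm]
  have hy_eq : y = lp.single 1 m (y m) := eq_of_forall_walpha_tsum_mul_eq fun w hw =>
    tendsto_nhds_unique ((continuous_pairing hw).tendsto y |>.mono_left nhdsWithin_le_nhds)
      (tendsto_const_nhds.congr' (hz.mono fun z hz => by rw [hz]))
  obtain ⟨z, ⟨-, hzy⟩, hz⟩ := (hE.and hz).exists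
  exact hzy (hz.trans hy_eq.symm)

lemma eq_alpha_or_eq_neg_alpha_of_mem_closure {y : ell1}
    (hy : y ∈ @closure _ (pairingTopology (Walpha r)) (signedBasis \ {y})) :
    y = alpha r ∨ y = -alpha r := by
  let := pairingTopology (Walpha r)
  have := mem_closure_iff_nhdsWithin_neBot.1 hy
  have hsplit := eq_single_add_single_of_tail fun m hm => apply_eq_zero_of_mem_closure hy hm
  have h0 := eventually_tsum_mul_eq (walpha_twoThenConst (r := r) 1 0)
    (finite_range_twoThenConst _ _ _) (s := signedBasis \ {y}) Set.sdiff_subset y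
  have h1 := eventually_tsum_mul_eq (walpha_twoThenConst (r := r) 0 1)
    (finite_range_twoThenConst _ _ _) (s := signedBasis \ {y}) Set.sdiff_subset y
  have hE : ∀ᶠ z in 𝓝[signedBasis \ {y}] y, z ∈ signedBasis \ {y} := self_mem_nhdsWithin
  obtain ⟨z, ⟨hzE, hzy⟩, hz0, hz1⟩ := (hE.and (h0.and h1)).exists
  obtain ⟨n, σ, hσ, rfl⟩ := exists_eq_single_of_mem_signedBasis hzE
  rw [hsplit, tsum_single_mul, tsum_single_add_single_mul] at hz0 hz1
  rcases n with _ | _ | k <;>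
    simp only [twoThenConst, mul_one, mul_zero, add_zero, zero_add] at hz0 hz1
  · refine absurd ?_ hzy
    rw [Set.mem_singleton_iff, hsplit, ← hz0, ← hz1, lp.single_zero, add_zero]
  · refine absurd ?_ hzy
    rw [Set.mem_singleton_iff, hsplit, ← hz0, ← hz1]
    simp only [lp.single_zero, zero_add]
  · rw [hsplit, ← hz0, ← hz1]
    rcases hσ with rfl | rfl
    · exact Or.inl (by rw [alpha, one_mul])
    · exact Or.inr (by rw [alpha, neg_add, neg_one_mul, lp.single_neg, lp.single_neg])

end Walpha

theorem stmt8_general (r : ℝ) (hr0 : 0 < r) :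
    let αl1 : ell1 := lp.single 1 0 (r / 2) + lp.single 1 1 (r / 2)
    let Wmem : (ℕ → ℝ) → Prop := fun x =>
      (∃ L : ℝ, Tendsto x atTop (𝓝 L)) ∧ Tendsto x atTop (𝓝 (r / 2 * (x 0 + x 1)))
    let ws : TopologicalSpace ell1 := TopologicalSpace.induced
      (fun y : ell1 => fun w : {x : ℕ → ℝ // Wmem x} => ∑' i, y i * w.1 i) inferInstance
    let E : Set ell1 := {z | ∃ i, z = basisv i ∨ z = -basisv i}
    αl1 ∈ @closure _ ws (E \ {αl1}) ∧ ‖αl1‖ = r ∧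
      (∀ y : ell1, y ∈ @closure _ ws (E \ {y}) → ‖y‖ ≤ r) := by
  intro αl1 Wmem ws E
  have hnorm : ‖alpha r‖ = r := norm_alpha.trans (abs_of_pos hr0)
  refine ⟨alpha_mem_closure hr0.ne', hnorm, fun y hy => ?_⟩
  rcases eq_alpha_or_eq_neg_alpha_of_mem_closure hy with rfl | rfl
  · exact hnorm.le
  · exact (norm_neg _).trans_le hnorm.le

theorem stmt8 (r : ℝ) (hr0 : 0 < r) (hr1 : r < 1) :
    let αl1 : ell1 := lp.single 1 0 (r / 2) + lp.single 1 1 (r / 2)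
    let Wmem : (ℕ → ℝ) → Prop := fun x =>
      (∃ L : ℝ, Tendsto x atTop (𝓝 L)) ∧ Tendsto x atTop (𝓝 (r / 2 * (x 0 + x 1)))
    let ws : TopologicalSpace ell1 := TopologicalSpace.induced
      (fun y : ell1 => fun w : {x : ℕ → ℝ // Wmem x} => ∑' i, y i * w.1 i) inferInstance
    let E : Set ell1 := {z | ∃ i, z = basisv i ∨ z = -basisv i}
    αl1 ∈ @closure _ ws (E \ {αl1}) ∧ ‖αl1‖ = r ∧
      (∀ y : ell1, y ∈ @closure _ ws (E \ {y}) → ‖y‖ ≤ r) :=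
  stmt8_general r hr0
end
end

section
/- Let $X$ be a Banach space with $X^* = \ell_1$ isometrically, and suppose there exist a subsequence $\{e_{n_k}^*\}$ of the standard basis of $\ell_1$ and $e^* \in S_{\ell_1}$ with $e_{n_k}^* \to e^*$ in $\sigma(\ell_1, X)$ and $e^*(n_k) \ge 0$ for all $k$. Then the set $C = \overline{\mathrm{conv}}^{w^*}\{e^*, e_{n_1}^*, e_{n_2}^*, \ldots\}$ is contained in the unit sphere $S_{\ell_1}$. -/
/-!
The generators have norm one and closed balls of `ℓ₁` are `w*`-closed, so `‖y‖ ≤ 1`. Conversely, it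
suffices to find for each `η > 0` one `v` in the unit ball of `X` with `g v ≥ 1 - η` for every
generator `g`: the half-space `{z | 1 - η ≤ z v}` is `w*`-closed and convex, so it contains `C`.

The sign sequence `s` with `s j * e* j = |e* j|` equals `1` at every `n k` (as `e* (n k) ≥ 0`), so
it norms every combination of generators; separating the image of the unit ball in `ℝᴺ⁺¹` from an
open orthant then gives `v` almost norming any finitely many generators at once. As
`e_{n_k}* → e*` weak-star, such a `v` almost norms all `e_{n_k}*` outside a finite block of indices,
and averaging `m` such vectors with disjoint exceptional blocks costs at most `2 / m`.
-/

open Filter Topology ENNReal NormedSpace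

noncomputable section

section SimultaneousNorming

variable {X : Type*} [NormedAddCommGroup X] [NormedSpace ℝ X]

theorem apply_indicator_nonpos_of_forall_lt {ι : Type*} [Fintype ι] [DecidableEq ι]
    (φ : StrongDual ℝ (ι → ℝ)) {r u : ℝ} (h : ∀ x : ι → ℝ, (∀ i, r < x i) → φ x < u) (i : ι) :
    φ (fun j => if i = j then 1 else 0) ≤ 0 := by
  set ei : ι → ℝ := fun j => if i = j then 1 else 0
  by_contra! hpos
  set x₀ : ι → ℝ := fun _ => r + 1
  set t := |u - φ x₀| / φ ei
  have hlt := h (x₀ + t • ei) fun j => by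
    have : 0 ≤ t * ei j := mul_nonneg (by positivity) (by simp only [ei]; split_ifs <;> norm_num)
    simp only [x₀, Pi.add_apply, Pi.smul_apply, smul_eq_mul]
    linarith
  rw [map_add, map_smul, smul_eq_mul, div_mul_cancel₀ _ hpos.ne'] at hlt
  linarith [le_abs_self (u - φ x₀)]

theorem exists_forall_lt_apply_of_sum_le_norm {ι : Type*} [Fintype ι]
    (f : ι → StrongDual ℝ X)
    (hf : ∀ c : ι → ℝ, (∀ i, 0 ≤ c i) → ∑ i, c i ≤ ‖∑ i, c i • f i‖) {δ : ℝ} (hδ : 0 < δ) :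
    ∃ v : X, ‖v‖ ≤ 1 ∧ ∀ i, 1 - δ < f i v := by
  classical
  by_contra! h
  set T : X →ₗ[ℝ] ι → ℝ := LinearMap.pi fun i => (f i : X →ₗ[ℝ] ℝ)
  set O : Set (ι → ℝ) := Set.univ.pi fun _ => Set.Ioi (1 - δ)
  have hdisj : Disjoint O (T '' Metric.closedBall 0 1) := by
    refine Set.disjoint_left.2 ?_
    rintro _ hO ⟨v, hv, rfl⟩
    obtain ⟨i, hi⟩ := h v (by simpa using hv)
    exact hi.not_gt (hO i (Set.mem_univ i))
  obtain ⟨φ, u, hφO, hφT⟩ := geometric_hahn_banach_open (convex_pi fun _ _ => convex_Ioi _)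
    (isOpen_set_pi Set.finite_univ fun _ _ => isOpen_Ioi)
    ((convex_closedBall 0 1).linear_image T) hdisj
  -- `φ` is bounded above on the orthant `O`, so `c ≥ 0`; then `c` contradicts `hf`.
  set c : ι → ℝ := fun i => -φ fun j => if i = j then 1 else 0
  have hφ : ∀ x, φ x = -∑ i, x i * c i := by
    intro x
    simpa [c, mul_comm] using φ.toLinearMap.pi_apply_eq_sum_univ x
  have hc : ∀ i, 0 ≤ c i := fun i =>
    neg_nonneg.2 (apply_indicator_nonpos_of_forall_lt φ (fun x hx => hφO x fun i _ => hx i) i)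
  set F : StrongDual ℝ X := ∑ i, c i • f i
  have hF : ∀ v : X, ‖v‖ ≤ 1 → F v ≤ -u := by
    intro v hv
    have := hφT (T v) ⟨v, by simpa using hv, rfl⟩
    rw [hφ] at this
    simp only [F, T, LinearMap.pi_apply, ContinuousLinearMap.coe_coe, sum_apply, smul_apply,
      smul_eq_mul, mul_comm (c _)] at this ⊢
    linarith
  have hu : 0 ≤ -u := by simpa using hF 0 (by simp)
  have hFnorm : ‖F‖ ≤ -u := F.opNorm_le_of_unit_norm hu fun v hv => by
    have := hF (-v) (by simp [hv])
    rw [map_neg] at this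
    exact abs_le.2 ⟨by linarith, hF v hv.le⟩
  have hO : -u < (1 - δ / 2) * ∑ i, c i := by
    have := hφO (fun _ => 1 - δ / 2) fun i _ => by simp only [Set.mem_Ioi]; linarith
    rw [hφ, ← Finset.mul_sum] at this
    linarith
  have hS : ∑ i, c i ≤ ‖F‖ := hf c hc
  nlinarith [mul_nonneg hδ.le (Finset.sum_nonneg fun i (_ : i ∈ Finset.univ) => hc i)]

end SimultaneousNorming

theorem sub_div_le_sum_div {m : ℕ} (hm : 0 < m) {x : ℕ → ℝ} {c d : ℝ} {j₀ : ℕ}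
    (h : ∀ j ≠ j₀, c ≤ x j) (h₀ : c - d ≤ x j₀) (hd : 0 ≤ d) :
    c - d / m ≤ (∑ j ∈ Finset.range m, x j) / m := by
  have hsum : ∑ j ∈ Finset.range m, (c - if j₀ = j then d else 0) ≤ ∑ j ∈ Finset.range m, x j :=
    Finset.sum_le_sum fun j _ => by
      split_ifs with hj
      · exact hj ▸ h₀
      · simpa using h j (Ne.symm hj)
  rw [Finset.sum_sub_distrib, Finset.sum_const, Finset.card_range, nsmul_eq_mul,
    Finset.sum_ite_eq] at hsum
  have hm' : (0 : ℝ) < m := Nat.cast_pos.2 hm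
  rw [le_div_iff₀ hm', sub_mul, div_mul_cancel₀ _ hm'.ne']
  split_ifs at hsum <;> linarith

theorem StrictMono.exists_forall_ne_lt_or_le {K : ℕ → ℕ} (hK : StrictMono K) (k : ℕ) :
    ∃ j₀, ∀ j ≠ j₀, k < K j ∨ K (j + 1) ≤ k := by
  classical
  have hex : ∃ j, k < K (j + 1) := ⟨k, (Nat.lt_succ_self k).trans_le (hK.id_le _)⟩
  refine ⟨Nat.find hex, fun j hj => ?_⟩
  rcases hj.lt_or_gt with hlt | hgt
  · exact Or.inr (not_lt.1 (Nat.find_min hex hlt))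
  · exact Or.inl ((Nat.find_spec hex).trans_le (hK.monotone hgt))

section GlidingHump

variable {X : Type*} [NormedAddCommGroup X] [NormedSpace ℝ X]
  {a : StrongDual ℝ X} {b : ℕ → StrongDual ℝ X}

theorem exists_blocks_of_tendsto {δ : ℝ} (hδ : 0 ≤ δ)
    (hconv : ∀ v, Tendsto (fun k => b k v) atTop (𝓝 (a v)))
    (hfin : ∀ N : ℕ, ∃ v : X, ‖v‖ ≤ 1 ∧ 1 - δ < a v ∧ ∀ k < N, 1 - δ < b k v) :
    ∃ (K : ℕ → ℕ) (v : ℕ → X), StrictMono K ∧ ∀ j, ‖v j‖ ≤ 1 ∧ 1 - δ < a (v j) ∧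
      ∀ k, k < K j ∨ K (j + 1) ≤ k → 1 - 2 * δ < b k (v j) := by
  have step : ∀ N : ℕ, ∃ v : X, ∃ N' > N, ‖v‖ ≤ 1 ∧ 1 - δ < a v ∧
      ∀ k, k < N ∨ N' ≤ k → 1 - 2 * δ < b k v := by
    intro N
    obtain ⟨v, hv, hav, hbv⟩ := hfin N
    obtain ⟨N', hN'⟩ := eventually_atTop.1
      ((hconv v).eventually (lt_mem_nhds (show 1 - 2 * δ < a v by linarith)))
    refine ⟨v, max N' (N + 1), by omega, hv, hav, fun k hk => ?_⟩
    rcases hk with hk | hk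
    · linarith [hbv k hk]
    · exact hN' k (le_of_max_le_left hk)
  choose v next hnext hv using step
  let K : ℕ → ℕ := fun j => next^[j] 0
  have hK : ∀ j, K (j + 1) = next (K j) := fun j => Function.iterate_succ_apply' next j 0
  refine ⟨K, fun j => v (K j), strictMono_nat_of_lt_succ fun j => hK j ▸ hnext _, fun j => ?_⟩
  obtain ⟨h₁, h₂, h₃⟩ := hv (K j)
  exact ⟨h₁, h₂, fun k hk => h₃ k (hK j ▸ hk)⟩

theorem exists_forall_le_apply_of_tendsto (hb : ∀ k, ‖b k‖ ≤ 1)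
    (hconv : ∀ v, Tendsto (fun k => b k v) atTop (𝓝 (a v)))
    (hfin : ∀ (N : ℕ) {δ : ℝ}, 0 < δ →
      ∃ v : X, ‖v‖ ≤ 1 ∧ 1 - δ < a v ∧ ∀ k < N, 1 - δ < b k v)
    {η : ℝ} (hη : 0 < η) :
    ∃ v : X, ‖v‖ ≤ 1 ∧ 1 - η ≤ a v ∧ ∀ k, 1 - η ≤ b k v := by
  obtain ⟨K, v, hK, hv⟩ :=
    exists_blocks_of_tendsto (δ := η / 4) (by positivity) hconv fun N => hfin N (by positivity)
  obtain ⟨m, hm⟩ := exists_nat_gt (4 / η)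
  have hm₀ : 0 < m := Nat.cast_pos.1 ((div_pos four_pos hη).trans hm)
  have h2m : 2 / (m : ℝ) ≤ η / 2 := by
    rw [div_le_iff₀ (Nat.cast_pos.2 hm₀)]
    rw [div_lt_iff₀ hη] at hm
    linarith
  set w : X := (m : ℝ)⁻¹ • ∑ j ∈ Finset.range m, v j
  have hw : ∀ g : StrongDual ℝ X, g w = (∑ j ∈ Finset.range m, g (v j)) / m := by
    intro g
    simp [w, map_sum, div_eq_inv_mul]
  refine ⟨w, ?_, ?_, fun k => ?_⟩
  · have hsum : ∑ _j ∈ Finset.range m, (m : ℝ)⁻¹ = 1 := by simp [hm₀.ne']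
    have := (convex_closedBall (0 : X) 1).sum_mem (fun _ _ => by positivity) hsum
      fun j _ => mem_closedBall_zero_iff.2 (hv j).1
    rwa [← Finset.smul_sum, mem_closedBall_zero_iff] at this
  · have := sub_div_le_sum_div hm₀ (x := fun j => a (v j)) (c := 1 - 2 * (η / 4)) (d := 2)
      (j₀ := 0) (fun j _ => by linarith [(hv j).2.1]) (by linarith [(hv 0).2.1]) two_pos.le
    rw [hw]
    linarith
  · obtain ⟨j₀, hj₀⟩ := hK.exists_forall_ne_lt_or_le k
    have hbk : -1 ≤ b k (v j₀) := by
      have := ((b k).le_opNorm (v j₀)).trans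
        (mul_le_one₀ (hb k) (norm_nonneg _) (hv j₀).1)
      exact (abs_le.1 (Real.norm_eq_abs _ ▸ this)).1
    have := sub_div_le_sum_div hm₀ (x := fun j => b k (v j)) (c := 1 - 2 * (η / 4)) (d := 2)
      (j₀ := j₀) (fun j hj => ((hv j).2.2 k (hj₀ j hj)).le) (by linarith) two_pos.le
    rw [hw]
    linarith

end GlidingHump

theorem le_norm_of_hasSum_mul {x : ell1} {s : ℕ → ℝ} (hs : ∀ j, |s j| ≤ 1) {r : ℝ}
    (h : HasSum (fun j => s j * x j) r) : r ≤ ‖x‖ := by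
  have hx : HasSum (fun j => |x j|) ‖x‖ := by
    simpa using lp.hasSum_norm (p := 1) (by norm_num) x
  refine hasSum_le (fun j => ?_) h hx
  calc s j * x j ≤ |s j| * |x j| := (le_abs_self _).trans (abs_mul _ _).le
    _ ≤ |x j| := mul_le_of_le_one_left (abs_nonneg _) (hs j)

theorem mul_norm_add_sum_le_norm {ι : Type*} [Fintype ι] {x : ell1} {m : ι → ℕ}
    (hx : ∀ i, 0 ≤ x (m i)) (α : ℝ) (c : ι → ℝ) :
    α * ‖x‖ + ∑ i, c i ≤ ‖α • x + ∑ i, c i • basisv (m i)‖ := by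
  -- `s` norms `x` and, thanks to `hx`, every `basisv (m i)` as well.
  set s : ℕ → ℝ := fun j => if x j < 0 then -1 else 1
  have hsx : HasSum (fun j => s j * x j) ‖x‖ := by
    convert lp.hasSum_norm (p := 1) (by norm_num) x using 1
    · funext j
      simp only [s]
      split_ifs with h <;> simp [abs_of_neg, abs_of_nonneg, h, not_lt.1]
    · simp
  have hsb : ∀ i, HasSum (fun j => s j * basisv (m i) j) 1 := by
    intro i
    convert hasSum_ite_eq (m i) (1 : ℝ) using 1
    funext j
    simp only [basisv, lp.single_apply, Pi.single_apply]
    split_ifs with h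
    · simp [s, h, not_lt.2 (hx i)]
    · simp
  have h := (hsx.mul_left α).add (hasSum_sum (s := Finset.univ) fun i _ => (hsb i).mul_left (c i))
  simp only [mul_one] at h
  refine le_norm_of_hasSum_mul (s := s) (fun j => by simp only [s]; split_ifs <;> norm_num)
    (h.congr_fun fun j => ?_)
  simp only [lp.coeFn_add, lp.coeFn_smul, lp.coeFn_sum, Pi.add_apply, Pi.smul_apply,
    Finset.sum_apply, smul_eq_mul, mul_add, Finset.mul_sum]
  congr 1
  · ring
  · exact Finset.sum_congr rfl fun i _ => by ring

section Predual

variable {X : Type*} [NormedAddCommGroup X] [NormedSpace ℝ X] (e : StrongDual ℝ X ≃ₗᵢ[ℝ] ell1)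

theorem exists_forall_lt_apply_basisv {x : ell1} (hx : ‖x‖ = 1) {n : ℕ → ℕ}
    (hpos : ∀ k, 0 ≤ x (n k)) (N : ℕ) {δ : ℝ} (hδ : 0 < δ) :
    ∃ v : X, ‖v‖ ≤ 1 ∧ 1 - δ < e.symm x v ∧ ∀ k < N, 1 - δ < e.symm (basisv (n k)) v := by
  let f : Option (Fin N) → StrongDual ℝ X :=
    fun i => e.symm (i.elim x fun k => basisv (n k))
  obtain ⟨v, hv, hfv⟩ := exists_forall_lt_apply_of_sum_le_norm f (fun c _ => by
    have := mul_norm_add_sum_le_norm (m := fun k : Fin N => n k) (fun k => hpos k)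
      (c none) (fun k => c (some k))
    simpa [f, Fintype.sum_option, hx, ← map_smul, ← map_sum, ← map_add] using this) hδ
  exact ⟨v, hv, hfv none, fun k hk => hfv (some ⟨k, hk⟩)⟩

theorem continuous_wstar_apply (v : X) :
    Continuous[wstar X e, _] fun z : ell1 => e.symm z v := by
  let _ : TopologicalSpace ell1 := wstar X e
  exact (WeakDual.eval_continuous v).comp continuous_induced_dom

theorem isClosed_wstar_closedBall (r : ℝ) :
    IsClosed[wstar X e] (Metric.closedBall (0 : ell1) r) := by
  let _ : TopologicalSpace ell1 := wstar X e
  have hball : Metric.closedBall (0 : ell1) r = (fun z => StrongDual.toWeakDual (e.symm z)) ⁻¹'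
      (WeakDual.toStrongDual ⁻¹' Metric.closedBall 0 r) := by
    ext z
    simp
  rw [hball]
  exact (WeakDual.isClosed_closedBall 0 r).preimage continuous_induced_dom

end Predual

theorem stmt9_general (X : Type*) [NormedAddCommGroup X] [NormedSpace ℝ X]
    (e : StrongDual ℝ X ≃ₗᵢ[ℝ] ell1) (n : ℕ → ℕ)
    (estar : ell1) (hnorm : ‖estar‖ = 1)
    (hconv : ∀ v : X,
      Tendsto (fun k => (e.symm (basisv (n k))) v) atTop (𝓝 ((e.symm estar) v)))
    (hpos : ∀ k, 0 ≤ estar (n k)) :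
    ∀ y ∈ @closure _ (wstar X e)
        (convexHull ℝ ({estar} ∪ Set.range fun k => basisv (n k))),
      ‖y‖ = 1 := by
  let _ : TopologicalSpace ell1 := wstar X e
  intro y hy
  have mem_of_subset : ∀ S : Set ell1, Convex ℝ S → IsClosed S →
      estar ∈ S → (∀ k, basisv (n k) ∈ S) → y ∈ S := fun S hS hSc hx hb =>
    hSc.closure_subset_iff.2 (convexHull_min (by rintro _ (rfl | ⟨k, rfl⟩); exacts [hx, hb k]) hS) hy
  have hle : ‖y‖ ≤ 1 := mem_closedBall_zero_iff.1 <|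
    mem_of_subset _ (convex_closedBall 0 1) (isClosed_wstar_closedBall e 1)
      (by simp [hnorm]) fun k => by simp [norm_basisv]
  refine le_antisymm hle (le_of_forall_pos_le_add fun η hη => ?_)
  obtain ⟨v, hv, hav, hbv⟩ := exists_forall_le_apply_of_tendsto
    (fun k => by rw [LinearIsometryEquiv.norm_map, norm_basisv]) hconv
    (fun N _ hδ => exists_forall_lt_apply_basisv e hnorm hpos N hδ) hη
  have hyv : 1 - η ≤ e.symm y v :=
    mem_of_subset {z | 1 - η ≤ e.symm z v}
      (convex_halfSpace_ge ⟨fun _ _ => by simp, fun _ _ => by simp⟩ _)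
      (isClosed_le continuous_const (continuous_wstar_apply e v)) hav hbv
  have hvy : e.symm y v ≤ ‖y‖ := by
    have := (e.symm y).le_opNorm v
    rw [LinearIsometryEquiv.norm_map] at this
    exact (le_abs_self _).trans (this.trans (mul_le_of_le_one_right (norm_nonneg _) hv))
  linarith

theorem stmt9 (X : Type*) [NormedAddCommGroup X] [NormedSpace ℝ X] [CompleteSpace X]
    (e : StrongDual ℝ X ≃ₗᵢ[ℝ] ell1) (n : ℕ → ℕ) (hn : StrictMono n)
    (estar : ell1) (hnorm : ‖estar‖ = 1)
    (hconv : ∀ v : X,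
      Tendsto (fun k => (e.symm (basisv (n k))) v) atTop (𝓝 ((e.symm estar) v)))
    (hpos : ∀ k, 0 ≤ estar (n k)) :
    ∀ y ∈ @closure _ (wstar X e)
        (convexHull ℝ ({estar} ∪ Set.range fun k => basisv (n k))),
      ‖y‖ = 1 :=
  stmt9_general X e n estar hnorm hconv hpos
end
end

section
/- Let $X$ be a Lindenstrauss space. If $x^*(x) < 1$ for every $x \in S_X$ and every $w^*$-limit point $x^*$ of $\mathrm{ext}\,B_{X^*}$ (property (pol-v)), then $\sup\{x^*(x) : x^* \in \mathrm{ext}\,B_{X^*} \setminus D(x)\} < 1$ for each $x \in S_X$ (property (pol-vii)). -/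
open Filter Topology ENNReal NormedSpace

noncomputable section

/-!
By Banach–Alaoglu the weak-star closure of `S = {φ ∈ ext B_{X*} | φ x < 1}` is compact, so
`φ ↦ φ x` attains its supremum over `S` on it, and it suffices that `ψ x < 1` on the closure.
A point `ψ` of the closure outside `S` is a weak-star limit point of `ext B_{X*} \ {ψ} ⊇ S`,
so (pol-v) applies to it.
-/

theorem mem_closure_wsDual_iff {X : Type*} [NormedAddCommGroup X] [NormedSpace ℝ X]
    {s : Set (StrongDual ℝ X)} {φ : StrongDual ℝ X} :
    φ ∈ @closure _ (wsDual X) s ↔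
      StrongDual.toWeakDual φ ∈ closure (StrongDual.toWeakDual '' s) := by
  rw [wsDual, closure_induced]

theorem IsCompact.exists_lt_forall_le_of_closure {α : Type*} [TopologicalSpace α]
    {S : Set α} {f : α → ℝ} {b : ℝ} (hS : IsCompact (closure S)) (hf : Continuous f)
    (hlt : ∀ a ∈ closure S, f a < b) : ∃ c < b, ∀ a ∈ S, f a ≤ c := by
  rcases S.eq_empty_or_nonempty with rfl | hne
  · exact ⟨b - 1, by linarith, by simp⟩
  obtain ⟨m, hm, hmax⟩ := hS.exists_isMaxOn hne.closure hf.continuousOn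
  exact ⟨f m, hlt m hm, fun a ha => hmax (subset_closure ha)⟩

theorem ContinuousLinearMap.apply_lt_one_of_not_norming {X : Type*} [SeminormedAddCommGroup X]
    [NormedSpace ℝ X] {φ : StrongDual ℝ X} {x : X} (hφ : ‖φ‖ ≤ 1) (hx : ‖x‖ = 1)
    (hD : ¬(‖φ‖ = 1 ∧ φ x = 1)) : φ x < 1 := by
  have hbound : φ x ≤ ‖φ‖ := by
    simpa [hx] using (le_abs_self (φ x)).trans (φ.le_opNorm x)
  refine lt_of_le_of_ne (hbound.trans hφ) fun h => hD ⟨le_antisymm hφ ?_, h⟩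
  linarith

theorem stmt16_general (X : Type*) [NormedAddCommGroup X] [NormedSpace ℝ X]
    (hpolv : ∀ x : X, ‖x‖ = 1 → ∀ φ : StrongDual ℝ X,
      φ ∈ @closure _ (wsDual X)
        (Set.extremePoints ℝ (Metric.closedBall (0 : StrongDual ℝ X) 1) \ {φ}) →
      φ x < 1) :
    ∀ x : X, ‖x‖ = 1 → ∃ c : ℝ, c < 1 ∧
      ∀ φ ∈ Set.extremePoints ℝ (Metric.closedBall (0 : StrongDual ℝ X) 1),
        ¬(‖φ‖ = 1 ∧ φ x = 1) → φ x ≤ c := by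
  intro x hx
  set E := Set.extremePoints ℝ (Metric.closedBall (0 : StrongDual ℝ X) 1)
  set S : Set (WeakDual ℝ X) := StrongDual.toWeakDual '' {φ ∈ E | φ x < 1}
  have hS_ball : closure S ⊆ WeakDual.toStrongDual ⁻¹' Metric.closedBall 0 1 :=
    closure_minimal (by rintro _ ⟨φ, ⟨hφ, -⟩, rfl⟩; exact hφ.1)
      (WeakDual.isClosed_closedBall 0 1)
  have hS_lt : ∀ ψ ∈ closure S, ψ x < 1 := by
    intro ψ hψ
    by_cases hψS : ψ ∈ S
    · obtain ⟨φ, ⟨-, hφ⟩, rfl⟩ := hψS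
      exact hφ
    refine hpolv x hx (WeakDual.toStrongDual ψ) (mem_closure_wsDual_iff.2 (closure_mono ?_ hψ))
    rintro _ ⟨φ, ⟨hφE, hφ⟩, rfl⟩
    exact ⟨φ, ⟨hφE, fun h => hψS ⟨φ, ⟨hφE, hφ⟩, h ▸ rfl⟩⟩, rfl⟩
  obtain ⟨c, hc, hbound⟩ := ((WeakDual.isCompact_closedBall 0 1).of_isClosed_subset
    isClosed_closure hS_ball).exists_lt_forall_le_of_closure (WeakDual.eval_continuous x) hS_lt
  refine ⟨c, hc, fun φ hφE hD => hbound _ ⟨φ, ⟨hφE, ?_⟩, rfl⟩⟩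
  exact φ.apply_lt_one_of_not_norming (by simpa using hφE.1) hx hD

theorem stmt16 (X : Type*) [NormedAddCommGroup X] [NormedSpace ℝ X] [CompleteSpace X]
    (Ω : Type*) [MeasurableSpace Ω] (μ : MeasureTheory.Measure Ω)
    (e : StrongDual ℝ X ≃ₗᵢ[ℝ] MeasureTheory.Lp ℝ 1 μ)
    (hpolv : ∀ x : X, ‖x‖ = 1 → ∀ φ : StrongDual ℝ X,
      φ ∈ @closure _ (wsDual X)
        (Set.extremePoints ℝ (Metric.closedBall (0 : StrongDual ℝ X) 1) \ {φ}) →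
      φ x < 1) :
    ∀ x : X, ‖x‖ = 1 → ∃ c : ℝ, c < 1 ∧
      ∀ φ ∈ Set.extremePoints ℝ (Metric.closedBall (0 : StrongDual ℝ X) 1),
        ¬(‖φ‖ = 1 ∧ φ x = 1) → φ x ≤ c :=
  stmt16_general X hpolv
end
end
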